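/- Suppose v* ∈ ℝⁿ satisfies ∇F(v*) = 0 and ∇²F(v*) ⪰ 0, where F(v) = f(v ⊙ v) for a C² function f. Then x* := v* ⊙ v* satisfies weak second-order necessary conditions for min f(x) subject to x ≥ 0: x* ≥ 0, ∇f(x*) ≥ 0, x*_i [∇f(x*)]_i = 0 for all i, and wᵀ∇²f(x*)w ≥ 0 for all w with w_i = 0 whenever x*_i = 0. -/

import Mathlib

/-! By the chain rule, `∇F(v) = 2 v ⊙ ∇f(v ⊙ v)` and
`sᵀ∇²F(v)s = 4 (v ⊙ s)ᵀ∇²f(v ⊙ v)(v ⊙ s) + 2 ∇f(v ⊙ v)ᵀ(s ⊙ s)`.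
The first identity gives complementarity `v_i [∇f]_i = 0`. Testing the second with `s = e_i`
where `v_i = 0` gives `[∇f]_i ≥ 0`; testing it with `s = w / v` (where `x / 0 = 0`), for which
`v ⊙ s = w` and `s ⊙ s` is supported where `∇f` vanishes, gives `wᵀ∇²f(v ⊙ v)w ≥ 0`. -/

noncomputable def grad {n : ℕ} (f : (Fin n → ℝ) → ℝ) (x : Fin n → ℝ) (i : Fin n) : ℝ :=
  fderiv ℝ f x (Pi.single i 1)

noncomputable def hessQ {n : ℕ} (f : (Fin n → ℝ) → ℝ) (x w : Fin n → ℝ) : ℝ :=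
  fderiv ℝ (fun y => fderiv ℝ f y w) x w

section

variable {n : ℕ} {f : (Fin n → ℝ) → ℝ}

theorem fderiv_single_eq_mul_grad (f : (Fin n → ℝ) → ℝ) (x : Fin n → ℝ) (i : Fin n) (c : ℝ) :
    fderiv ℝ f x (Pi.single i c) = c * grad f x i := by
  rw [grad, ← smul_eq_mul, ← map_smul, ← Pi.single_smul', smul_eq_mul, mul_one]

theorem fderiv_apply_eq_sum_grad (f : (Fin n → ℝ) → ℝ) (x u : Fin n → ℝ) :
    fderiv ℝ f x u = ∑ i, u i * grad f x i := by
  conv_lhs => rw [← Finset.univ_sum_single u]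
  simp only [map_sum, fderiv_single_eq_mul_grad]

theorem hessQ_eq_fderiv_fderiv {x : Fin n → ℝ} (hf : DifferentiableAt ℝ (fderiv ℝ f) x)
    (w : Fin n → ℝ) : hessQ f x w = fderiv ℝ (fderiv ℝ f) x w w := by
  rw [hessQ, (hf.hasFDerivAt.clm_apply (hasFDerivAt_const w x)).fderiv]
  simp

theorem hasFDerivAt_mul_self (v : Fin n → ℝ) :
    HasFDerivAt (fun y : Fin n → ℝ => y * y)
      ((2 : ℝ) • v • ContinuousLinearMap.id ℝ (Fin n → ℝ)) v := by
  simpa [two_smul] using (hasFDerivAt_id (𝕜 := ℝ) v).mul (hasFDerivAt_id v)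

theorem HasFDerivAt.comp_mul_self {G : Type*} [NormedAddCommGroup G] [NormedSpace ℝ G]
    {g : (Fin n → ℝ) → G} {g' : (Fin n → ℝ) →L[ℝ] G} {v : Fin n → ℝ}
    (hg : HasFDerivAt g g' (v * v)) :
    HasFDerivAt (fun y => g (y * y)) (g'.comp ((2 : ℝ) • v • ContinuousLinearMap.id ℝ _)) v :=
  hg.comp (f := fun y => y * y) v (hasFDerivAt_mul_self v)

theorem fderiv_comp_mul_self_apply {v : Fin n → ℝ} (hf : DifferentiableAt ℝ f (v * v))
    (u : Fin n → ℝ) : fderiv ℝ (fun y => f (y * y)) v u = 2 * fderiv ℝ f (v * v) (v * u) := by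
  rw [hf.hasFDerivAt.comp_mul_self.fderiv]
  simp

theorem grad_comp_mul_self {v : Fin n → ℝ} (hf : DifferentiableAt ℝ f (v * v)) (i : Fin n) :
    grad (fun y => f (y * y)) v i = 2 * v i * grad f (v * v) i := by
  rw [grad, fderiv_comp_mul_self_apply hf, ← Pi.single_mul_right, mul_one,
    fderiv_single_eq_mul_grad, mul_assoc]

theorem hessQ_comp_mul_self {v : Fin n → ℝ} (hf : Differentiable ℝ f)
    (hf' : DifferentiableAt ℝ (fderiv ℝ f) (v * v)) (s : Fin n → ℝ) :
    hessQ (fun y => f (y * y)) v s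
      = 4 * hessQ f (v * v) (v * s) + 2 * fderiv ℝ f (v * v) (s * s) := by
  have hD : (fun y => fderiv ℝ (fun y => f (y * y)) y s)
      = fun y => 2 * fderiv ℝ f (y * y) (y * s) :=
    funext fun y => fderiv_comp_mul_self_apply (hf _) s
  have hs : HasFDerivAt (fun y : Fin n → ℝ => y * s)
      (s • ContinuousLinearMap.id ℝ (Fin n → ℝ)) v := by
    simpa using (hasFDerivAt_id (𝕜 := ℝ) v).mul (hasFDerivAt_const s v)
  have hc := hf'.hasFDerivAt.comp_mul_self
  rw [hessQ, hD, ((hc.clm_apply hs).const_mul 2).fderiv, hessQ_eq_fderiv_fderiv hf']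
  simp only [ContinuousLinearMap.comp_smulₛₗ, Real.ringHom_apply, ContinuousLinearMap.flip_smul,
    smul_apply, smul_add, add_apply, ContinuousLinearMap.comp_apply, ContinuousLinearMap.id_apply,
    smul_eq_mul, ContinuousLinearMap.flip_apply]
  ring

theorem hessQ_zero (f : (Fin n → ℝ) → ℝ) (x : Fin n → ℝ) : hessQ f x 0 = 0 := by
  simp [hessQ]

theorem mul_grad_eq_zero_of_fderiv_comp_mul_self_eq_zero {v : Fin n → ℝ}
    (hf : DifferentiableAt ℝ f (v * v)) (h : fderiv ℝ (fun y => f (y * y)) v = 0) (i : Fin n) :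
    v i * grad f (v * v) i = 0 := by
  have h2 := grad_comp_mul_self hf i
  rw [grad, h, zero_apply, mul_assoc, zero_eq_mul] at h2
  exact h2.resolve_left two_ne_zero

theorem grad_nonneg_of_hessQ_comp_mul_self_nonneg {v : Fin n → ℝ} (hf : Differentiable ℝ f)
    (hf' : DifferentiableAt ℝ (fderiv ℝ f) (v * v))
    (hpsd : ∀ s, 0 ≤ hessQ (fun y => f (y * y)) v s) {i : Fin n} (hvi : v i = 0) :
    0 ≤ grad f (v * v) i := by
  have h := hpsd (Pi.single i 1)
  rw [hessQ_comp_mul_self hf hf', ← Pi.single_mul_right, hvi, zero_mul, Pi.single_zero,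
    hessQ_zero, ← Pi.single_mul, one_mul, ← grad] at h
  linarith

theorem hessQ_nonneg_of_hessQ_comp_mul_self_nonneg {v : Fin n → ℝ} (hf : Differentiable ℝ f)
    (hf' : DifferentiableAt ℝ (fderiv ℝ f) (v * v)) (hcompl : ∀ i, v i * grad f (v * v) i = 0)
    (hpsd : ∀ s, 0 ≤ hessQ (fun y => f (y * y)) v s) {w : Fin n → ℝ}
    (hw : ∀ i, v i = 0 → w i = 0) : 0 ≤ hessQ f (v * v) w := by
  have hvw : v * (w / v) = w := funext fun i => by
    by_cases hvi : v i = 0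
    · simp [hvi, hw i hvi]
    · exact mul_div_cancel₀ (w i) hvi
  have hfirst : fderiv ℝ f (v * v) (w / v * (w / v)) = 0 := by
    rw [fderiv_apply_eq_sum_grad]
    refine Finset.sum_eq_zero fun i _ => ?_
    rcases mul_eq_zero.mp (hcompl i) with h | h <;> simp [h]
  have h := hpsd (w / v)
  rw [hessQ_comp_mul_self hf hf', hvw, hfirst] at h
  linarith

end

theorem stmt3 {n : ℕ} (f : (Fin n → ℝ) → ℝ) (hf : ContDiff ℝ 2 f)
    (F : (Fin n → ℝ) → ℝ) (hF : ∀ v, F v = f (v * v))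
    (vs : Fin n → ℝ)
    (hgrad : fderiv ℝ F vs = 0)
    (hpsd : ∀ s : Fin n → ℝ, 0 ≤ hessQ F vs s)
    (xs : Fin n → ℝ) (hxdef : xs = vs * vs) :
    (∀ i, 0 ≤ xs i) ∧ (∀ i, 0 ≤ grad f xs i) ∧ (∀ i, xs i * grad f xs i = 0) ∧
      (∀ w : Fin n → ℝ, (∀ i, xs i = 0 → w i = 0) → 0 ≤ hessQ f xs w) := by
  obtain rfl : F = fun v => f (v * v) := funext hF
  subst hxdef
  have hf₁ : Differentiable ℝ f := hf.differentiable (by norm_num)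
  have hf₂ : Differentiable ℝ (fderiv ℝ f) :=
    (hf.fderiv_right (m := 1) (by norm_num)).differentiable (by norm_num)
  have hcompl := mul_grad_eq_zero_of_fderiv_comp_mul_self_eq_zero (hf₁ _) hgrad
  refine ⟨fun i => mul_self_nonneg (vs i), fun i => ?_,
    fun i => by rw [Pi.mul_apply, mul_assoc, hcompl i, mul_zero], fun w hw => ?_⟩
  · by_cases hvi : vs i = 0
    · exact grad_nonneg_of_hessQ_comp_mul_self_nonneg hf₁ (hf₂ _) hpsd hvi
    · exact ((mul_eq_zero.mp (hcompl i)).resolve_left hvi).ge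
  · exact hessQ_nonneg_of_hessQ_comp_mul_self_nonneg hf₁ (hf₂ _) hcompl hpsd
      fun i hi => hw i (by simp [hi])
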